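/- The function α ↦ V*_α, where V*_α is the variance of ν*_α, is convex on (0,1] and satisfies V*_α ≥ (1/12)(α⁻² - 1) for all α ∈ (0,1], with equality when α⁻¹ is an integer. -/

import Mathlib

/-!
`Vstar α` is the value at `α` of the affine function
`Vsecant k α = (1/2) ∑_{i=1}^k i (1 - i α)`, the secant of `f(α) = (α⁻² - 1)/12` through
`1/(k+1)` and `1/k`, taken at `k = ⌊α⁻¹⌋₊`. The summands are nonnegative exactly for `i ≤ α⁻¹`,
so this `k` maximises `Vsecant k α` over `k`: `Vstar` is a pointwise maximum of affine functions,
hence convex. It lies above `f` because `12 α² (Vsecant k α - f α)` factors as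
`(1 - k α) ((k + 1) α - 1) (1 + (2k + 1) α)`, whose first two factors are nonnegative exactly
when `1/(k+1) ≤ α ≤ 1/k`.
-/

/-- The variance of the extremal measure `ν*_α`. -/
noncomputable def Vstar (α : ℝ) : ℝ :=
  1 / 12 * (⌊α⁻¹⌋₊ : ℝ) * (1 + (⌊α⁻¹⌋₊ : ℝ)) * (3 - α - 2 * α * (⌊α⁻¹⌋₊ : ℝ))

open Set

theorem convexOn_of_forall_le_of_exists_eq {𝕜 E β ι : Type*} [Semiring 𝕜] [PartialOrder 𝕜]
    [AddCommMonoid E] [AddCommMonoid β] [PartialOrder β] [IsOrderedAddMonoid β] [SMul 𝕜 E]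
    [SMul 𝕜 β] [PosSMulMono 𝕜 β] {s : Set E}
    {f : E → β} {g : ι → E → β} (hs : Convex 𝕜 s) (hg : ∀ i, ConvexOn 𝕜 s (g i))
    (hle : ∀ i, ∀ x ∈ s, g i x ≤ f x) (heq : ∀ x ∈ s, ∃ i, g i x = f x) : ConvexOn 𝕜 s f := by
  refine ⟨hs, fun x hx y hy a b ha hb hab => ?_⟩
  obtain ⟨i, hi⟩ := heq _ (hs hx hy ha hb hab)
  calc f (a • x + b • y) = g i (a • x + b • y) := hi.symm
    _ ≤ a • g i x + b • g i y := (hg i).2 hx hy ha hb hab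
    _ ≤ a • f x + b • f y := add_le_add (smul_le_smul_of_nonneg_left (hle i x hx) ha)
        (smul_le_smul_of_nonneg_left (hle i y hy) hb)

noncomputable def Vsecant (k α : ℝ) : ℝ :=
  1 / 12 * k * (1 + k) * (3 - α - 2 * α * k)

theorem Vstar_eq_Vsecant (α : ℝ) : Vstar α = Vsecant ⌊α⁻¹⌋₊ α := rfl

theorem convexOn_Vsecant (k : ℝ) : ConvexOn ℝ univ (Vsecant k) :=
  ⟨convex_univ, fun x _ y _ a b _ _ hab => le_of_eq <| by
    unfold Vsecant
    linear_combination (-(1 / 4) * (k + k ^ 2)) * hab⟩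

theorem Vsecant_succ_sub (k α : ℝ) :
    Vsecant (k + 1) α - Vsecant k α = (k + 1) * (1 - (k + 1) * α) / 2 := by
  unfold Vsecant
  ring

theorem Vsecant_sub_eq {α : ℝ} (hα : α ≠ 0) (k : ℝ) :
    Vsecant k α - 1 / 12 * (α⁻¹ ^ 2 - 1) =
      (1 - k * α) * ((k + 1) * α - 1) * (1 + (2 * k + 1) * α) / (12 * α ^ 2) := by
  unfold Vsecant
  field_simp
  ring

theorem natFloor_inv_mul_le_one {K : Type*} [Field K] [LinearOrder K] [IsStrictOrderedRing K]
    [FloorSemiring K] {α : K} (hα : 0 < α) : (⌊α⁻¹⌋₊ : K) * α ≤ 1 := by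
  simpa [hα.ne'] using mul_le_mul_of_nonneg_right (Nat.floor_le (inv_pos.2 hα).le) hα.le

theorem one_lt_natFloor_inv_add_one_mul {K : Type*} [Field K] [LinearOrder K]
    [IsStrictOrderedRing K] [FloorSemiring K] {α : K} (hα : 0 < α) :
    1 < ((⌊α⁻¹⌋₊ : K) + 1) * α := by
  simpa [hα.ne'] using mul_lt_mul_of_pos_right (Nat.lt_floor_add_one α⁻¹) hα

theorem Vsecant_le_of_le {α : ℝ} (hα : 0 ≤ α) {k j : ℕ} (hkj : k ≤ j) (hj : j * α ≤ 1) :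
    Vsecant k α ≤ Vsecant j α := by
  induction j, hkj using Nat.le_induction with
  | base => exact le_rfl
  | succ m _ ih =>
    push_cast at hj ⊢
    have hstep : 0 ≤ Vsecant (m + 1) α - Vsecant m α := by
      rw [Vsecant_succ_sub]
      exact div_nonneg (mul_nonneg (by positivity) (by linarith)) zero_le_two
    linarith [ih (by linarith [hα])]

theorem Vsecant_le_of_ge {α : ℝ} {k j : ℕ} (hjk : j ≤ k) (hj : 1 ≤ (j + 1) * α) :
    Vsecant k α ≤ Vsecant j α := by
  induction k, hjk using Nat.le_induction with
  | base => exact le_rfl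
  | succ m hjm ih =>
    have hm : (j : ℝ) ≤ m := by exact_mod_cast hjm
    have hstep : Vsecant (m + 1) α - Vsecant m α ≤ 0 := by
      rw [Vsecant_succ_sub]
      exact div_nonpos_of_nonpos_of_nonneg
        (mul_nonpos_of_nonneg_of_nonpos (by positivity) (by nlinarith)) zero_le_two
    push_cast
    linarith

theorem Vsecant_le_Vstar {α : ℝ} (hα : 0 < α) (k : ℕ) : Vsecant k α ≤ Vstar α := by
  rw [Vstar_eq_Vsecant]
  rcases le_total k ⌊α⁻¹⌋₊ with hk | hk
  · exact Vsecant_le_of_le hα.le hk (natFloor_inv_mul_le_one hα)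
  · exact Vsecant_le_of_ge hk (one_lt_natFloor_inv_add_one_mul hα).le

theorem lower_bound_le_Vstar {α : ℝ} (hα : 0 < α) : 1 / 12 * (α⁻¹ ^ 2 - 1) ≤ Vstar α := by
  rw [Vstar_eq_Vsecant, ← sub_nonneg, Vsecant_sub_eq hα.ne']
  have hfloor_le := natFloor_inv_mul_le_one hα
  have hlt_floor := one_lt_natFloor_inv_add_one_mul hα
  have : 0 ≤ (1 - ⌊α⁻¹⌋₊ * α) * ((⌊α⁻¹⌋₊ + 1) * α - 1) * (1 + (2 * ⌊α⁻¹⌋₊ + 1) * α) :=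
    mul_nonneg (mul_nonneg (by linarith) (by linarith)) (by positivity)
  positivity

theorem Vstar_inv_natCast {k : ℕ} (hk : k ≠ 0) :
    Vstar (k : ℝ)⁻¹ = 1 / 12 * (((k : ℝ)⁻¹)⁻¹ ^ 2 - 1) := by
  have hk' : (k : ℝ) ≠ 0 := Nat.cast_ne_zero.2 hk
  have h := Vsecant_sub_eq (inv_ne_zero hk') k
  rw [mul_inv_cancel₀ hk', sub_self, zero_mul, zero_mul, zero_div, sub_eq_zero] at h
  rw [Vstar_eq_Vsecant, inv_inv, Nat.floor_natCast]
  simpa only [inv_inv] using h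

theorem Vstar_convex_and_lower_bound :
    ConvexOn ℝ (Set.Ioc (0 : ℝ) 1) Vstar ∧
    (∀ α ∈ Set.Ioc (0 : ℝ) 1, 1 / 12 * (α⁻¹ ^ 2 - 1) ≤ Vstar α) ∧
    (∀ k : ℕ, 1 ≤ k → Vstar ((k : ℝ)⁻¹) = 1 / 12 * (((k : ℝ)⁻¹)⁻¹ ^ 2 - 1)) := by
  have hconvex : ConvexOn ℝ (Ioi 0) Vstar :=
    convexOn_of_forall_le_of_exists_eq (convex_Ioi 0)
      (fun k : ℕ => (convexOn_Vsecant k).subset (subset_univ _) (convex_Ioi 0))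
      (fun k _ hα => Vsecant_le_Vstar hα k) (fun α _ => ⟨⌊α⁻¹⌋₊, rfl⟩)
  exact ⟨hconvex.subset Ioc_subset_Ioi_self (convex_Ioc 0 1),
    fun α hα => lower_bound_le_Vstar hα.1,
    fun k hk => Vstar_inv_natCast (Nat.one_le_iff_ne_zero.1 hk)⟩
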